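/- arXiv:1306.6030 — 5 statements merged into one kernel-verified Lean document; each statement's English description precedes it below -/
import Mathlib

section
/- Let S be a finite set of rational primes. For i = 1, 2 let a_i, b_i be coprime integers with b_i ≠ 0 and |a_i| ≠ |b_i|, such that every prime factor of a_i·b_i lies in S, and set F_i(n) equal to the largest positive divisor of |a_i^n − b_i^n| coprime to every prime in S. If F_1(n) = F_2(n) for all n ≥ 1, then a_1/b_1 = a_2/b_2 or a_1/b_1 = b_2/a_2. -/
/-!
By Fermat and lifting the exponent, for `e = 2 ∏_{p ∈ S} (p - 1)` and every `p ∈ S` one has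
`v_p(aⁿ - bⁿ) ≤ v_p(aᵉ - bᵉ) + v_p(n)`, so the `S`-part of `aⁿ - bⁿ` divides `K n` with
`K = |aᵉ - bᵉ|`: `F(n)` agrees with `|aⁿ - bⁿ|` up to a factor at most `K n`.
After swapping `a` and `b` we may assume `|b| < |a|`; then `F(n)` grows like `|a|ⁿ` up to
polynomial factors, which pins down `|a₁| = |a₂| = m`. Both `|aᵢⁿ - bᵢⁿ|` are multiples of
`F(n)`, which is roughly at least `mⁿ / (K n)`, and they lie within `2 max(|b₁|, |b₂|)ⁿ` of each
other, so they coincide for large `n`. An even `n` then gives `|b₁| = |b₂|` and an odd `n`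
fixes the signs.
-/

open Filter

lemma emultiplicity_two_pow_sub_pow_le {a b : ℤ} (ha : ¬ 2 ∣ a) (hb : ¬ 2 ∣ b) {e : ℕ}
    (he : 2 ∣ e) (n : ℕ) :
    emultiplicity 2 (a ^ n - b ^ n) ≤
      emultiplicity 2 (a ^ e - b ^ e) + emultiplicity (2 : ℤ) n := by
  have hab : 2 ∣ a - b := by
    rw [← even_iff_two_dvd] at *
    exact Int.even_sub.2 (iff_of_false ha hb)
  have lte := Int.two_pow_sub_pow (n := 2 * n) hab ha (even_two_mul n)
  rw [Nat.cast_mul, emultiplicity_mul Int.prime_two, Nat.cast_ofNat,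
    FiniteMultiplicity.emultiplicity_self (Int.finiteMultiplicity_iff.2 (by norm_num)),
    ← emultiplicity_mul Int.prime_two, ← sq_sub_sq, add_comm 1, ← add_assoc] at lte
  have hsq : a ^ 2 - b ^ 2 ∣ a ^ e - b ^ e := by
    obtain ⟨k, rfl⟩ := he
    simpa only [pow_mul] using sub_dvd_pow_sub_pow (a ^ 2) (b ^ 2) k
  have hdbl : a ^ n - b ^ n ∣ a ^ (2 * n) - b ^ (2 * n) := by
    simpa only [← pow_mul, mul_comm] using sub_dvd_pow_sub_pow (a ^ n) (b ^ n) 2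
  calc emultiplicity 2 (a ^ n - b ^ n)
      ≤ emultiplicity 2 (a ^ (2 * n) - b ^ (2 * n)) :=
        emultiplicity_le_emultiplicity_of_dvd_right hdbl
    _ = emultiplicity 2 (a ^ 2 - b ^ 2) + emultiplicity (2 : ℤ) n :=
      ENat.add_left_injective_of_ne_top ENat.one_ne_top lte
    _ ≤ _ := by gcongr; exact emultiplicity_le_emultiplicity_of_dvd_right hsq

lemma emultiplicity_pow_sub_pow_le_of_odd {p : ℕ} (hp : p.Prime) (hodd : Odd p) {a b : ℤ}
    (ha : ¬ (p : ℤ) ∣ a) (hb : ¬ (p : ℤ) ∣ b) {e : ℕ} (he : p - 1 ∣ e) (n : ℕ) :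
    emultiplicity (p : ℤ) (a ^ n - b ^ n) ≤
      emultiplicity (p : ℤ) (a ^ e - b ^ e) + emultiplicity (p : ℤ) n := by
  have hpZ := Nat.prime_iff_prime_int.mp hp
  have fermat {x : ℤ} (hx : ¬ (p : ℤ) ∣ x) : x ^ e ≡ 1 [ZMOD p] := by
    obtain ⟨k, rfl⟩ := he
    simpa [pow_mul] using (Int.ModEq.pow_card_sub_one_eq_one hp
      (hpZ.coprime_iff_not_dvd.2 hx).symm).pow k
  have hdvd : (p : ℤ) ∣ a ^ e - b ^ e := ((fermat hb).trans (fermat ha).symm).dvd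
  have hpow : a ^ n - b ^ n ∣ (a ^ e) ^ n - (b ^ e) ^ n := by
    simpa only [← pow_mul, mul_comm] using sub_dvd_pow_sub_pow (a ^ n) (b ^ n) e
  calc emultiplicity (p : ℤ) (a ^ n - b ^ n)
      ≤ emultiplicity (p : ℤ) ((a ^ e) ^ n - (b ^ e) ^ n) :=
        emultiplicity_le_emultiplicity_of_dvd_right hpow
    _ = _ := by
      rw [Int.emultiplicity_pow_sub_pow hp hodd hdvd (fun h => ha (hpZ.dvd_of_dvd_pow h)),
        Int.natCast_emultiplicity]

lemma not_dvd_pow_sub_pow_of_dvd_mul {p a b : ℤ} (hp : Prime p) (hab : IsCoprime a b)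
    (hpab : p ∣ a * b) {n : ℕ} (hn : n ≠ 0) : ¬ p ∣ a ^ n - b ^ n := by
  intro hdvd
  apply hp.not_isUnit
  rcases hp.dvd_mul.1 hpab with hpa | hpb
  · have hpbn : p ∣ b ^ n := by simpa using dvd_sub (dvd_pow hpa hn) hdvd
    exact hab.isUnit_of_dvd' hpa (hp.dvd_of_dvd_pow hpbn)
  · have hpan : p ∣ a ^ n := by simpa using dvd_add hdvd (dvd_pow hpb hn)
    exact hab.isUnit_of_dvd' (hp.dvd_of_dvd_pow hpan) hpb

lemma emultiplicity_pow_sub_pow_le {p : ℕ} (hp : p.Prime) {a b : ℤ} (hab : IsCoprime a b)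
    {e : ℕ} (h2e : 2 ∣ e) (hpe : p - 1 ∣ e) (n : ℕ) :
    emultiplicity (p : ℤ) (a ^ n - b ^ n) ≤
      emultiplicity (p : ℤ) (a ^ e - b ^ e) + emultiplicity (p : ℤ) n := by
  have hpZ := Nat.prime_iff_prime_int.mp hp
  rcases eq_or_ne n 0 with rfl | hn
  · simp
  by_cases hpab : (p : ℤ) ∣ a * b
  · simp [emultiplicity_eq_zero.2 (not_dvd_pow_sub_pow_of_dvd_mul hpZ hab hpab hn)]
  have ha : ¬ (p : ℤ) ∣ a := fun h => hpab (h.mul_right b)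
  have hb : ¬ (p : ℤ) ∣ b := fun h => hpab (h.mul_left a)
  rcases hp.eq_two_or_odd' with rfl | hodd
  · exact emultiplicity_two_pow_sub_pow_le ha hb h2e n
  · exact emultiplicity_pow_sub_pow_le_of_odd hp hodd ha hb hpe n

def coprimeDivisors (S : Set ℕ) (X : ℤ) : Set ℕ :=
  {d : ℕ | 0 < d ∧ (d : ℤ) ∣ X ∧ ∀ p ∈ S, ¬ p ∣ d}

section coprimeDivisors

variable {S : Set ℕ} {X : ℤ} {f : ℕ}

lemma coprimeDivisors_sub_comm (S : Set ℕ) (x y : ℤ) :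
    coprimeDivisors S (x - y) = coprimeDivisors S (y - x) := by
  ext d
  simp only [coprimeDivisors, Set.mem_ofPred_eq, dvd_sub_comm]

lemma IsGreatest.dvd_natAbs (hf : IsGreatest (coprimeDivisors S X) f) : f ∣ X.natAbs :=
  Int.natCast_dvd.1 hf.1.2.1

lemma IsGreatest.mem_of_prime_dvd_natAbs_div (hS : ∀ p ∈ S, p.Prime)
    (hf : IsGreatest (coprimeDivisors S X) f) {q : ℕ} (hq : q.Prime)
    (hqd : q ∣ X.natAbs / f) : q ∈ S := by
  by_contra hqS
  have hmem : f * q ∈ coprimeDivisors S X := by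
    refine ⟨Nat.mul_pos hf.1.1 hq.pos, ?_, fun p hp hpd => ?_⟩
    · exact Int.natCast_dvd.2 (Nat.mul_dvd_of_dvd_div hf.dvd_natAbs hqd)
    · rcases (Nat.Prime.dvd_mul (hS p hp)).1 hpd with hpf | hpq
      · exact hf.1.2.2 p hp hpf
      · exact hqS ((Nat.prime_dvd_prime_iff_eq (hS p hp) hq).1 hpq ▸ hp)
  have := hf.2 hmem
  nlinarith [hq.two_le, hf.1.1]

lemma IsGreatest.natAbs_div_dvd (hS : ∀ p ∈ S, p.Prime)
    (hf : IsGreatest (coprimeDivisors S X) f) {M : ℤ}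
    (hM : ∀ p ∈ S, emultiplicity (p : ℤ) X ≤ emultiplicity (p : ℤ) M) :
    X.natAbs / f ∣ M.natAbs := by
  refine (Nat.dvd_iff_prime_pow_dvd_dvd _ _).2 fun p k hp hpk => ?_
  rcases eq_or_ne k 0 with rfl | hk
  · simp
  have hpS := hf.mem_of_prime_dvd_natAbs_div hS hp ((dvd_pow_self p hk).trans hpk)
  have hpX : ((p ^ k : ℕ) : ℤ) ∣ X :=
    Int.natCast_dvd.2 (hpk.trans (Nat.div_dvd_of_dvd hf.dvd_natAbs))
  push_cast at hpX
  exact Int.natCast_dvd.1 (by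
    push_cast
    exact pow_dvd_of_le_emultiplicity ((le_emultiplicity_of_pow_dvd hpX).trans (hM p hpS)))

end coprimeDivisors

lemma pow_sub_pow_ne_zero {a b : ℤ} (hne : a.natAbs ≠ b.natAbs) {n : ℕ} (hn : n ≠ 0) :
    a ^ n - b ^ n ≠ 0 := by
  refine sub_ne_zero.2 fun h => hne (Nat.pow_left_injective hn ?_)
  simpa only [Int.natAbs_pow] using congrArg Int.natAbs h

lemma exists_natAbs_pow_sub_pow_le {S : Set ℕ} (hSfin : S.Finite) (hS : ∀ p ∈ S, p.Prime)
    {a b : ℤ} (hab : IsCoprime a b) (hne : a.natAbs ≠ b.natAbs) :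
    ∃ K, ∀ n ≠ 0, ∀ f, IsGreatest (coprimeDivisors S (a ^ n - b ^ n)) f →
      (a ^ n - b ^ n).natAbs ≤ f * (K * n) := by
  set e := 2 * ∏ p ∈ hSfin.toFinset, (p - 1)
  have he : e ≠ 0 := mul_ne_zero two_ne_zero <| Finset.prod_ne_zero_iff.2 fun p hp => by
    have := (hS p (hSfin.mem_toFinset.1 hp)).two_le
    omega
  refine ⟨(a ^ e - b ^ e).natAbs, fun n hn f hf => ?_⟩
  have hdvd : (a ^ n - b ^ n).natAbs / f ∣ ((a ^ e - b ^ e) * n).natAbs :=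
    hf.natAbs_div_dvd hS fun p hp => by
      rw [emultiplicity_mul (Nat.prime_iff_prime_int.mp (hS p hp))]
      refine emultiplicity_pow_sub_pow_le (hS p hp) hab (dvd_mul_right 2 _) ?_ n
      exact dvd_mul_of_dvd_right (Finset.dvd_prod_of_mem _ (hSfin.mem_toFinset.2 hp)) 2
  rw [Int.natAbs_mul, Int.natAbs_natCast] at hdvd
  have hpos : 0 < (a ^ e - b ^ e).natAbs * n :=
    Nat.pos_of_ne_zero (mul_ne_zero (Int.natAbs_ne_zero.2 (pow_sub_pow_ne_zero hne he)) hn)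
  calc (a ^ n - b ^ n).natAbs = f * ((a ^ n - b ^ n).natAbs / f) :=
        (Nat.mul_div_cancel' hf.dvd_natAbs).symm
    _ ≤ f * ((a ^ e - b ^ e).natAbs * n) := Nat.mul_le_mul_left f (Nat.le_of_dvd hpos hdvd)

lemma eventually_mul_pow_lt_pow {c m : ℕ} (h : c < m) (C : ℕ) :
    ∀ᶠ n in atTop, C * n * c ^ n < m ^ n := by
  have hm : (0 : ℝ) < m := by exact_mod_cast c.zero_le.trans_lt h
  have hr : (c / m : ℝ) < 1 := (div_lt_one hm).2 (by exact_mod_cast h)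
  have hlim := (tendsto_self_mul_const_pow_of_lt_one (by positivity) hr).const_mul (C : ℝ)
  rw [mul_zero] at hlim
  filter_upwards [hlim.eventually (gt_mem_nhds one_pos)] with n hn
  rw [div_pow, ← mul_assoc, mul_div_assoc', div_lt_one (by positivity)] at hn
  exact_mod_cast hn

lemma natAbs_pow_le_natAbs_pow_sub_pow_add (a b : ℤ) (n : ℕ) :
    a.natAbs ^ n ≤ (a ^ n - b ^ n).natAbs + b.natAbs ^ n := by
  rw [← Int.natAbs_pow, ← Int.natAbs_pow]
  simpa using Int.natAbs_add_le (a ^ n - b ^ n) (b ^ n)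

lemma natAbs_pow_sub_pow_le (a b : ℤ) (n : ℕ) :
    (a ^ n - b ^ n).natAbs ≤ a.natAbs ^ n + b.natAbs ^ n := by
  rw [← Int.natAbs_pow, ← Int.natAbs_pow]
  exact Int.natAbs_sub_le _ _

lemma natAbs_pow_sub_pow_of_even {a b : ℤ} (h : b.natAbs ≤ a.natAbs) {n : ℕ} (hn : Even n) :
    (a ^ n - b ^ n).natAbs = a.natAbs ^ n - b.natAbs ^ n := by
  have hpow : b.natAbs ^ n ≤ a.natAbs ^ n := Nat.pow_le_pow_left h n
  have hpowZ : b ^ n ≤ a ^ n := by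
    zify at hpow
    rwa [hn.pow_abs, hn.pow_abs] at hpow
  zify [hpow]
  rw [hn.pow_abs, hn.pow_abs]
  exact abs_of_nonneg (sub_nonneg.2 hpowZ)

section growth

variable {a₁ b₁ a₂ b₂ : ℤ} {F : ℕ → ℕ} {K : ℕ}

lemma natAbs_le_natAbs_of_eventually_le
    (h₁ : b₁.natAbs < a₁.natAbs) (h₂ : b₂.natAbs < a₂.natAbs)
    (hup : ∀ᶠ n in atTop, (a₁ ^ n - b₁ ^ n).natAbs ≤ F n * (K * n))
    (hF : ∀ᶠ n in atTop, F n ≤ (a₂ ^ n - b₂ ^ n).natAbs) :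
    a₁.natAbs ≤ a₂.natAbs := by
  by_contra! hlt
  set M := max a₂.natAbs b₁.natAbs
  obtain ⟨n, hn, hup, hF, hgrowth⟩ := ((eventually_ge_atTop 1).and (hup.and (hF.and
    (eventually_mul_pow_lt_pow (max_lt hlt h₁) (2 * K + 1))))).exists
  refine hgrowth.not_ge ?_
  have hM₂ : a₂.natAbs ^ n + b₂.natAbs ^ n ≤ M ^ n + M ^ n := by
    gcongr
    · exact le_max_left _ _
    · exact h₂.le.trans (le_max_left _ _)
  calc a₁.natAbs ^ n ≤ (a₁ ^ n - b₁ ^ n).natAbs + b₁.natAbs ^ n :=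
        natAbs_pow_le_natAbs_pow_sub_pow_add a₁ b₁ n
    _ ≤ (a₂ ^ n - b₂ ^ n).natAbs * (K * n) + M ^ n := by
        gcongr
        · exact hup.trans (Nat.mul_le_mul_right _ hF)
        · exact le_max_right _ _
    _ ≤ (M ^ n + M ^ n) * (K * n) + M ^ n := by
        gcongr
        exact (natAbs_pow_sub_pow_le a₂ b₂ n).trans hM₂
    _ ≤ (2 * K + 1) * n * M ^ n := by
        have : M ^ n ≤ n * M ^ n := Nat.le_mul_of_pos_left _ hn
        nlinarith

lemma eventually_natAbs_pow_sub_pow_eq (hm : a₁.natAbs = a₂.natAbs)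
    (h₁ : b₁.natAbs < a₁.natAbs) (h₂ : b₂.natAbs < a₂.natAbs)
    (hdvd₁ : ∀ᶠ n in atTop, F n ∣ (a₁ ^ n - b₁ ^ n).natAbs)
    (hdvd₂ : ∀ᶠ n in atTop, F n ∣ (a₂ ^ n - b₂ ^ n).natAbs)
    (hup : ∀ᶠ n in atTop, (a₂ ^ n - b₂ ^ n).natAbs ≤ F n * (K * n)) :
    ∀ᶠ n in atTop, (a₁ ^ n - b₁ ^ n).natAbs = (a₂ ^ n - b₂ ^ n).natAbs := by
  set M := max b₁.natAbs b₂.natAbs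
  filter_upwards [eventually_ge_atTop 1, hdvd₁, hdvd₂, hup,
    eventually_mul_pow_lt_pow (max_lt (hm ▸ h₁) h₂) (2 * K + 1)] with n hn hdvd₁ hdvd₂ hup hgrowth
  by_contra hne
  have hF : F n ≤ M ^ n + M ^ n := by
    have hdiff := Int.natAbs_le_of_dvd_ne_zero
      (dvd_sub (Int.natCast_dvd_natCast.2 hdvd₁) (Int.natCast_dvd_natCast.2 hdvd₂))
      (sub_ne_zero.2 (by exact_mod_cast hne))
    have hc₁ : b₁.natAbs ^ n ≤ M ^ n := by gcongr; exact le_max_left _ _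
    have hc₂ : b₂.natAbs ^ n ≤ M ^ n := by gcongr; exact le_max_right _ _
    have hlo₁ := natAbs_pow_le_natAbs_pow_sub_pow_add a₁ b₁ n
    have hhi₁ := natAbs_pow_sub_pow_le a₁ b₁ n
    have := natAbs_pow_le_natAbs_pow_sub_pow_add a₂ b₂ n
    have := natAbs_pow_sub_pow_le a₂ b₂ n
    rw [hm] at hlo₁ hhi₁
    omega
  refine hgrowth.not_ge ?_
  calc a₂.natAbs ^ n ≤ (a₂ ^ n - b₂ ^ n).natAbs + b₂.natAbs ^ n :=
        natAbs_pow_le_natAbs_pow_sub_pow_add a₂ b₂ n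
    _ ≤ (M ^ n + M ^ n) * (K * n) + M ^ n := by
        gcongr
        · exact hup.trans (Nat.mul_le_mul_right _ hF)
        · exact le_max_right _ _
    _ ≤ (2 * K + 1) * n * M ^ n := by
        have : M ^ n ≤ n * M ^ n := Nat.le_mul_of_pos_left _ hn
        nlinarith

end growth

lemma mul_eq_mul_of_eventually_natAbs_pow_sub_pow_eq {a₁ b₁ a₂ b₂ : ℤ}
    (hm : a₁.natAbs = a₂.natAbs) (h₁ : b₁.natAbs ≤ a₁.natAbs) (h₂ : b₂.natAbs ≤ a₂.natAbs)
    (h : ∀ᶠ n in atTop, (a₁ ^ n - b₁ ^ n).natAbs = (a₂ ^ n - b₂ ^ n).natAbs) :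
    a₁ * b₂ = a₂ * b₁ := by
  obtain ⟨B, hB⟩ := eventually_atTop.1 h
  have hc : b₁.natAbs = b₂.natAbs := by
    have heven := hB (2 * (B + 1)) (by omega)
    rw [natAbs_pow_sub_pow_of_even h₁ (even_two_mul _),
      natAbs_pow_sub_pow_of_even h₂ (even_two_mul _), hm] at heven
    have := Nat.pow_le_pow_left (hm ▸ h₁) (2 * (B + 1))
    have := Nat.pow_le_pow_left h₂ (2 * (B + 1))
    exact Nat.pow_left_injective (n := 2 * (B + 1)) (by omega) (by dsimp only; omega)
  have hodd := hB (2 * B + 1) (by omega)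
  -- a sign change in only one of `a`, `b` turns `x - y` into `±(x + y)`, forcing `x * y = 0`
  have hsum {x y : ℤ} (h : (x + y).natAbs = (x - y).natAbs) : x = 0 ∨ y = 0 := by omega
  rcases Int.natAbs_eq_natAbs_iff.1 hm with rfl | rfl <;>
    rcases Int.natAbs_eq_natAbs_iff.1 hc with rfl | rfl
  · ring
  · rw [(odd_two_mul_add_one B).neg_pow, sub_neg_eq_add] at hodd
    rcases hsum hodd with h0 | h0 <;> simp at h0 <;> simp [h0]
  · rw [(odd_two_mul_add_one B).neg_pow, ← Int.natAbs_neg, neg_sub, sub_neg_eq_add,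
      add_comm] at hodd
    rcases hsum hodd with h0 | h0 <;> simp at h0 <;> simp [h0]
  · ring

theorem mul_eq_mul_of_isGreatest_coprimeDivisors {S : Set ℕ} (hSfin : S.Finite)
    (hS : ∀ p ∈ S, p.Prime) {a₁ b₁ a₂ b₂ : ℤ} (hab₁ : IsCoprime a₁ b₁) (hab₂ : IsCoprime a₂ b₂)
    (h₁ : b₁.natAbs < a₁.natAbs) (h₂ : b₂.natAbs < a₂.natAbs) {F : ℕ → ℕ}
    (hF₁ : ∀ n, 1 ≤ n → IsGreatest (coprimeDivisors S (a₁ ^ n - b₁ ^ n)) (F n))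
    (hF₂ : ∀ n, 1 ≤ n → IsGreatest (coprimeDivisors S (a₂ ^ n - b₂ ^ n)) (F n)) :
    a₁ * b₂ = a₂ * b₁ := by
  obtain ⟨K₁, hK₁⟩ := exists_natAbs_pow_sub_pow_le hSfin hS hab₁ h₁.ne'
  obtain ⟨K₂, hK₂⟩ := exists_natAbs_pow_sub_pow_le hSfin hS hab₂ h₂.ne'
  have hup₁ : ∀ᶠ n in atTop, (a₁ ^ n - b₁ ^ n).natAbs ≤ F n * (K₁ * n) :=
    (eventually_ge_atTop 1).mono fun n hn => hK₁ n (by omega) _ (hF₁ n hn)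
  have hup₂ : ∀ᶠ n in atTop, (a₂ ^ n - b₂ ^ n).natAbs ≤ F n * (K₂ * n) :=
    (eventually_ge_atTop 1).mono fun n hn => hK₂ n (by omega) _ (hF₂ n hn)
  have hdvd₁ : ∀ᶠ n in atTop, F n ∣ (a₁ ^ n - b₁ ^ n).natAbs :=
    (eventually_ge_atTop 1).mono fun n hn => (hF₁ n hn).dvd_natAbs
  have hdvd₂ : ∀ᶠ n in atTop, F n ∣ (a₂ ^ n - b₂ ^ n).natAbs :=
    (eventually_ge_atTop 1).mono fun n hn => (hF₂ n hn).dvd_natAbs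
  have hle {a b : ℤ} (hne : a.natAbs ≠ b.natAbs)
      (hdvd : ∀ᶠ n in atTop, F n ∣ (a ^ n - b ^ n).natAbs) :
      ∀ᶠ n in atTop, F n ≤ (a ^ n - b ^ n).natAbs :=
    ((eventually_ge_atTop 1).and hdvd).mono fun n hn => Nat.le_of_dvd
      (Int.natAbs_pos.2 (pow_sub_pow_ne_zero hne (by omega))) hn.2
  have hm : a₁.natAbs = a₂.natAbs :=
    (natAbs_le_natAbs_of_eventually_le h₁ h₂ hup₁ (hle h₂.ne' hdvd₂)).antisymm
      (natAbs_le_natAbs_of_eventually_le h₂ h₁ hup₂ (hle h₁.ne' hdvd₁))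
  exact mul_eq_mul_of_eventually_natAbs_pow_sub_pow_eq hm h₁.le h₂.le
    (eventually_natAbs_pow_sub_pow_eq hm h₁ h₂ hdvd₁ hdvd₂ hup₂)

theorem mul_eq_mul_or_mul_eq_mul_of_isGreatest_coprimeDivisors {S : Set ℕ} (hSfin : S.Finite)
    (hS : ∀ p ∈ S, p.Prime) {a₁ b₁ a₂ b₂ : ℤ} (hab₁ : IsCoprime a₁ b₁) (hab₂ : IsCoprime a₂ b₂)
    (hne₁ : a₁.natAbs ≠ b₁.natAbs) (hne₂ : a₂.natAbs ≠ b₂.natAbs) {F : ℕ → ℕ}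
    (hF₁ : ∀ n, 1 ≤ n → IsGreatest (coprimeDivisors S (a₁ ^ n - b₁ ^ n)) (F n))
    (hF₂ : ∀ n, 1 ≤ n → IsGreatest (coprimeDivisors S (a₂ ^ n - b₂ ^ n)) (F n)) :
    a₁ * b₂ = a₂ * b₁ ∨ a₁ * a₂ = b₁ * b₂ := by
  have swap {a b : ℤ} (h : ∀ n, 1 ≤ n → IsGreatest (coprimeDivisors S (a ^ n - b ^ n)) (F n)) :
      ∀ n, 1 ≤ n → IsGreatest (coprimeDivisors S (b ^ n - a ^ n)) (F n) := fun n hn => by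
    rw [coprimeDivisors_sub_comm]
    exact h n hn
  have key := @mul_eq_mul_of_isGreatest_coprimeDivisors S hSfin hS
  rcases hne₁.lt_or_gt with h₁ | h₁ <;> rcases hne₂.lt_or_gt with h₂ | h₂
  · exact .inl (by linarith [key hab₁.symm hab₂.symm h₁ h₂ (swap hF₁) (swap hF₂)])
  · exact .inr (by linarith [key hab₁.symm hab₂ h₁ h₂ (swap hF₁) hF₂])
  · exact .inr (by linarith [key hab₁ hab₂.symm h₁ h₂ hF₁ (swap hF₂)])
  · exact .inl (key hab₁ hab₂ h₁ h₂ hF₁ hF₂)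

theorem stmt_4_general (S : Set ℕ) (hSfin : S.Finite) (hSprime : ∀ p ∈ S, p.Prime)
    (a₁ b₁ a₂ b₂ : ℤ)
    (hab₁ : IsCoprime a₁ b₁) (hb₁ : b₁ ≠ 0) (hne₁ : a₁.natAbs ≠ b₁.natAbs)
    (hab₂ : IsCoprime a₂ b₂) (hb₂ : b₂ ≠ 0) (hne₂ : a₂.natAbs ≠ b₂.natAbs)
    (F₁ F₂ : ℕ → ℕ)
    (hF₁ : ∀ n, 1 ≤ n →
      IsGreatest {d : ℕ | 0 < d ∧ (d : ℤ) ∣ a₁ ^ n - b₁ ^ n ∧ ∀ p ∈ S, ¬ p ∣ d} (F₁ n))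
    (hF₂ : ∀ n, 1 ≤ n →
      IsGreatest {d : ℕ | 0 < d ∧ (d : ℤ) ∣ a₂ ^ n - b₂ ^ n ∧ ∀ p ∈ S, ¬ p ∣ d} (F₂ n))
    (hFeq : ∀ n, 1 ≤ n → F₁ n = F₂ n) :
    (a₁ : ℚ) / b₁ = (a₂ : ℚ) / b₂ ∨ (a₁ : ℚ) / b₁ = (b₂ : ℚ) / a₂ := by
  have hb₁Q : (b₁ : ℚ) ≠ 0 := by exact_mod_cast hb₁
  have hb₂Q : (b₂ : ℚ) ≠ 0 := by exact_mod_cast hb₂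
  rcases mul_eq_mul_or_mul_eq_mul_of_isGreatest_coprimeDivisors hSfin hSprime hab₁ hab₂ hne₁ hne₂
    hF₁ (fun n hn => hFeq n hn ▸ hF₂ n hn) with h | h
  · left
    rw [div_eq_div_iff hb₁Q hb₂Q]
    exact_mod_cast h
  · right
    have ha₂ : a₂ ≠ 0 := by
      rintro rfl
      simp [hb₁, hb₂] at h
    have ha₂Q : (a₂ : ℚ) ≠ 0 := by exact_mod_cast ha₂
    rw [div_eq_div_iff hb₁Q ha₂Q]
    exact_mod_cast (by linarith : a₁ * a₂ = b₂ * b₁)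

/-- Let `S` be a finite set of rational primes. For `i = 1, 2` let `aᵢ, bᵢ` be
coprime integers with `bᵢ ≠ 0` and `|aᵢ| ≠ |bᵢ|`, such that every prime factor of `aᵢ·bᵢ`
lies in `S`, and set `Fᵢ n` equal to the largest positive divisor of `|aᵢⁿ − bᵢⁿ|` coprime
to every prime in `S`. If `F₁ n = F₂ n` for all `n ≥ 1`, then `a₁/b₁ = a₂/b₂` or
`a₁/b₁ = b₂/a₂`. -/
theorem stmt_4 (S : Set ℕ) (hSfin : S.Finite) (hSprime : ∀ p ∈ S, p.Prime)
    (a₁ b₁ a₂ b₂ : ℤ)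
    (hab₁ : IsCoprime a₁ b₁) (hb₁ : b₁ ≠ 0) (hne₁ : a₁.natAbs ≠ b₁.natAbs)
    (hab₂ : IsCoprime a₂ b₂) (hb₂ : b₂ ≠ 0) (hne₂ : a₂.natAbs ≠ b₂.natAbs)
    (hS₁ : ∀ p : ℕ, p.Prime → (p : ℤ) ∣ a₁ * b₁ → p ∈ S)
    (hS₂ : ∀ p : ℕ, p.Prime → (p : ℤ) ∣ a₂ * b₂ → p ∈ S)
    (F₁ F₂ : ℕ → ℕ)
    (hF₁ : ∀ n, 1 ≤ n →
      IsGreatest {d : ℕ | 0 < d ∧ (d : ℤ) ∣ a₁ ^ n - b₁ ^ n ∧ ∀ p ∈ S, ¬ p ∣ d} (F₁ n))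
    (hF₂ : ∀ n, 1 ≤ n →
      IsGreatest {d : ℕ | 0 < d ∧ (d : ℤ) ∣ a₂ ^ n - b₂ ^ n ∧ ∀ p ∈ S, ¬ p ∣ d} (F₂ n))
    (hFeq : ∀ n, 1 ≤ n → F₁ n = F₂ n) :
    (a₁ : ℚ) / b₁ = (a₂ : ℚ) / b₂ ∨ (a₁ : ℚ) / b₁ = (b₂ : ℚ) / a₂ :=
  stmt_4_general S hSfin hSprime a₁ b₁ a₂ b₂ hab₁ hb₁ hne₁ hab₂ hb₂ hne₂ F₁ F₂ hF₁ hF₂ hFeq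
end

section
/- Let m, n be coprime integers with |m| ≠ |n|. A sequence (a_k)_{k≥1} of positive integers satisfies both (i) a_k divides n^k − m^k for all k ≥ 1, and (ii) gcd(a_k, (n^ℓ − m^ℓ)/a_ℓ) = 1 for all k ≠ ℓ, if and only if there exists a set S of rational primes such that for every k ≥ 1, a_k = |n^k − m^k| · ∏_{p∈S}|n^k − m^k|_p, i.e. a_k is the largest positive divisor of |n^k − m^k| coprime to every prime in S. -/
/-- Let `m, n` be coprime integers with `|m| ≠ |n|`. A sequence `(a_k)` of
positive integers satisfies both (i) `a_k ∣ n^k − m^k` for all `k ≥ 1`, and (ii)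
`gcd(a_k, (n^ℓ − m^ℓ)/a_ℓ) = 1` for all `k ≠ ℓ`, if and only if there is a set `S` of
rational primes such that for every `k ≥ 1`, `a_k` is the largest positive divisor of
`|n^k − m^k|` coprime to every prime in `S`. -/
theorem stmt_5 (m n : ℤ) (hmn : IsCoprime m n) (hne : m.natAbs ≠ n.natAbs)
    (a : ℕ → ℕ) (hapos : ∀ k, 1 ≤ k → 0 < a k) :
    ((∀ k, 1 ≤ k → (a k : ℤ) ∣ n ^ k - m ^ k) ∧
      (∀ k ℓ, 1 ≤ k → 1 ≤ ℓ → k ≠ ℓ →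
        ∀ c : ℤ, (a ℓ : ℤ) * c = n ^ ℓ - m ^ ℓ → IsCoprime (a k : ℤ) c)) ↔
    (∃ S : Set ℕ, (∀ p ∈ S, p.Prime) ∧ ∀ k, 1 ≤ k →
      IsGreatest {d : ℕ | 0 < d ∧ (d : ℤ) ∣ n ^ k - m ^ k ∧ ∀ p ∈ S, ¬ p ∣ d} (a k)) := by
  have hN0 : ∀ k, 1 ≤ k → (n ^ k - m ^ k).natAbs ≠ 0 := by
    intro k hk h
    apply hne
    have h' : n ^ k = m ^ k := by
      have := Int.natAbs_eq_zero.mp h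
      linarith
    have h2 : n.natAbs ^ k = m.natAbs ^ k := by
      rw [← Int.natAbs_pow, ← Int.natAbs_pow, h']
    exact (Nat.pow_left_injective (Nat.one_le_iff_ne_zero.mp hk) h2).symm
  constructor
  · rintro ⟨h1, h2⟩
    -- S = primes dividing no a_k
    refine ⟨{p | p.Prime ∧ ∀ k, 1 ≤ k → ¬ p ∣ a k}, fun p hp => hp.1, ?_⟩
    have ha0 : ∀ k, 1 ≤ k → a k ≠ 0 := fun k hk => (hapos k hk).ne'
    have hc0 : ∀ k, 1 ≤ k → ∀ c : ℤ, (a k : ℤ) * c = n ^ k - m ^ k → c ≠ 0 := by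
      intro k hk c hc h0
      apply hN0 k hk
      rw [← hc, h0, mul_zero, Int.natAbs_zero]
    have step : ∀ p : ℕ, p.Prime → ∀ k ℓ, 1 ≤ k → 1 ≤ ℓ → k ≠ ℓ → p ∣ a k →
        (a ℓ).factorization p = (n ^ ℓ - m ^ ℓ).natAbs.factorization p := by
      intro p hp k ℓ hk hℓ hkl hpk
      obtain ⟨c, hc⟩ := h1 ℓ hℓ
      have hcop := h2 k ℓ hk hℓ hkl c hc.symm
      have hpc : ¬ p ∣ c.natAbs := by
        intro hpc
        have hdc : (p : ℤ) ∣ c := Int.natAbs_dvd_natAbs.mp (by simpa using hpc)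
        have hda : (p : ℤ) ∣ (a k : ℤ) := Int.natCast_dvd_natCast.mpr hpk
        have hu := hcop.isUnit_of_dvd' hda hdc
        have h2le := hp.two_le
        rcases Int.isUnit_iff.mp hu with h | h <;> omega
      have hNc : (n ^ ℓ - m ^ ℓ).natAbs = a ℓ * c.natAbs := by
        rw [hc, Int.natAbs_mul, Int.natAbs_natCast]
      have hcn0 : c.natAbs ≠ 0 := by
        intro h0
        exact hc0 ℓ hℓ c hc.symm (Int.natAbs_eq_zero.mp h0)
      rw [hNc, Nat.factorization_mul (ha0 ℓ hℓ) hcn0]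
      simp [Nat.factorization_eq_zero_of_not_dvd hpc]
    have key : ∀ p : ℕ, p.Prime → (∃ k, 1 ≤ k ∧ p ∣ a k) → ∀ ℓ, 1 ≤ ℓ →
        (a ℓ).factorization p = (n ^ ℓ - m ^ ℓ).natAbs.factorization p := by
      rintro p hp ⟨k, hk, hpk⟩ ℓ hℓ
      by_cases h : k = ℓ
      · subst h
        -- use index 2k
        have h2k : (1:ℕ) ≤ 2 * k := by omega
        have hkne : k ≠ 2 * k := by omega
        have hdvdN : (n ^ k - m ^ k) ∣ (n ^ (2 * k) - m ^ (2 * k)) :=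
          ⟨n ^ k + m ^ k, by rw [two_mul, pow_add, pow_add]; ring⟩
        have hpN2 : p ∣ (n ^ (2 * k) - m ^ (2 * k)).natAbs := by
          have hpNk : p ∣ (n ^ k - m ^ k).natAbs := by
            have : (a k : ℤ) ∣ n ^ k - m ^ k := h1 k hk
            exact dvd_trans hpk (by simpa using Int.natAbs_dvd_natAbs.mpr this)
          exact dvd_trans hpNk (Int.natAbs_dvd_natAbs.mpr hdvdN)
        have hfac := step p hp k (2 * k) hk h2k hkne hpk
        have hpa2 : p ∣ a (2 * k) := by
          have h1le : 1 ≤ (a (2 * k)).factorization p := by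
            rw [hfac]
            exact (Nat.Prime.pow_dvd_iff_le_factorization hp (hN0 (2*k) h2k)).mp
              (by simpa using hpN2)
          simpa using (Nat.Prime.pow_dvd_iff_le_factorization hp (ha0 (2*k) h2k)).mpr h1le
        exact step p hp (2 * k) k h2k hk hkne.symm hpa2
      · exact step p hp k ℓ hk hℓ h hpk
    intro k hk
    constructor
    · refine ⟨hapos k hk, h1 k hk, ?_⟩
      rintro p ⟨hp, hpS⟩
      exact hpS k hk
    · rintro d ⟨hd0, hddvd, hdS⟩
      have hdvd : d ∣ a k := by
        rw [← Nat.factorization_le_iff_dvd hd0.ne' (ha0 k hk)]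
        intro p
        by_cases hcase : p.Prime ∧ p ∣ d
        · obtain ⟨hp, hpd⟩ := hcase
          have hpS : ∃ ℓ, 1 ≤ ℓ ∧ p ∣ a ℓ := by
            by_contra hcon
            push_neg at hcon
            exact hdS p ⟨hp, hcon⟩ hpd
          have hak := key p hp hpS k hk
          have hdN : d ∣ (n ^ k - m ^ k).natAbs := by
            simpa using Int.natAbs_dvd_natAbs.mpr hddvd
          have := (Nat.factorization_le_iff_dvd hd0.ne' (hN0 k hk)).mpr hdN p
          rw [hak]
          exact this
        · have : d.factorization p = 0 := by
            by_cases hp : p.Prime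
            · exact Nat.factorization_eq_zero_of_not_dvd (fun h => hcase ⟨hp, h⟩)
            · exact Nat.factorization_eq_zero_of_not_prime d hp
          simp [this]
      exact Nat.le_of_dvd (hapos k hk) hdvd
  · rintro ⟨S, hSp, hgr⟩
    constructor
    · intro k hk
      exact (hgr k hk).1.2.1
    · intro k ℓ hk hℓ hkl c hc
      rw [Int.isCoprime_iff_gcd_eq_one]
      by_contra hne1
      have : ¬ Nat.Coprime (a k) c.natAbs := by
        intro h
        exact hne1 (by simpa [Int.gcd] using h)
      rw [Nat.Prime.not_coprime_iff_dvd] at this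
      obtain ⟨p, hp, hpa, hpc⟩ := this
      have hpS : p ∉ S := fun hpS => (hgr k hk).1.2.2 p hpS hpa
      -- a ℓ * p is in the set for ℓ
      have hmem : a ℓ * p ∈ {d : ℕ | 0 < d ∧ (d : ℤ) ∣ n ^ ℓ - m ^ ℓ ∧ ∀ q ∈ S, ¬ q ∣ d} := by
        refine ⟨Nat.mul_pos (hapos ℓ hℓ) hp.pos, ?_, ?_⟩
        · have hpcZ : (p : ℤ) ∣ c := Int.natAbs_dvd_natAbs.mp (by simpa using hpc)
          obtain ⟨c', hc'⟩ := hpcZ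
          exact ⟨c', by rw [← hc, hc']; push_cast; ring⟩
        · intro q hq hqd
          rcases (hSp q hq).dvd_mul.mp hqd with h | h
          · exact (hgr ℓ hℓ).1.2.2 q hq h
          · exact hpS ((Nat.prime_dvd_prime_iff_eq (hSp q hq) hp).mp h ▸ hq)
      have := (hgr ℓ hℓ).2 hmem
      have h2 : 2 ≤ p := hp.two_le
      nlinarith [hapos ℓ hℓ]
end

section
/- There is no abelian group G together with a group automorphism T : G → G such that for every n ≥ 1 the fixed-point set {g ∈ G : T^n(g) = g} is finite of cardinality 6 when 5 divides n and of cardinality 1 when 5 does not divide n. (In particular, the function 1/((1−z)(1−z^5)), which is the dynamical zeta function of the permutation (1)(23456) of a six-element set, is not the dynamical zeta function of any abelian group automorphism.) -/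
/-- There is no abelian group `G` together with a group automorphism `T : G → G`
such that for every `n ≥ 1` the fixed-point set `{g ∈ G : T^n(g) = g}` is finite of
cardinality 6 when `5 ∣ n` and of cardinality 1 when `5 ∤ n`. (In particular, the function
`1/((1−z)(1−z^5))`, the dynamical zeta function of the permutation `(1)(23456)` of a
six-element set, is not the dynamical zeta function of any abelian group automorphism.) -/
theorem stmt_6 :
    ¬ ∃ (G : Type) (_ : AddCommGroup G) (T : G ≃+ G),
      ∀ n : ℕ, 1 ≤ n →
        {g : G | (⇑T)^[n] g = g}.Finite ∧
          Nat.card {g : G | (⇑T)^[n] g = g} = if 5 ∣ n then 6 else 1 := by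
  rintro ⟨G, _, T, h⟩
  obtain ⟨h5fin, h5card⟩ := h 5 (by norm_num)
  obtain ⟨h1fin, h1card⟩ := h 1 le_rfl
  rw [if_pos (by norm_num)] at h5card
  rw [if_neg (by norm_num)] at h1card
  -- iterate of T is additive
  have hiter : ∀ (n : ℕ) (x y : G), (⇑T)^[n] (x + y) = (⇑T)^[n] x + (⇑T)^[n] y := by
    intro n
    induction n with
    | zero => simp
    | succ k ih => intro x y; rw [Function.iterate_succ_apply', Function.iterate_succ_apply',
        Function.iterate_succ_apply', ih, map_add]
  have hiter0 : ∀ n : ℕ, (⇑T)^[n] (0 : G) = 0 := by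
    intro n
    induction n with
    | zero => rfl
    | succ k ih => rw [Function.iterate_succ_apply', ih, map_zero]
  have hiterneg : ∀ (n : ℕ) (x : G), (⇑T)^[n] (-x) = -((⇑T)^[n] x) := by
    intro n
    induction n with
    | zero => simp
    | succ k ih => intro x; rw [Function.iterate_succ_apply', Function.iterate_succ_apply',
        ih, map_neg]
  -- the fixed points of T^5 as a subgroup
  set H : AddSubgroup G :=
    { carrier := {g : G | (⇑T)^[5] g = g}
      add_mem' := fun {a b} ha hb => by simp only [Set.mem_setOf_eq] at *; rw [hiter, ha, hb]
      zero_mem' := hiter0 5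
      neg_mem' := fun {a} ha => by simp only [Set.mem_setOf_eq] at *; rw [hiterneg, ha] } with hH
  -- the 2-torsion of H as a subgroup
  set K : AddSubgroup G :=
    { carrier := {g : G | 2 • g = 0 ∧ (⇑T)^[5] g = g}
      add_mem' := fun {a b} ha hb => by
        refine ⟨?_, ?_⟩
        · rw [smul_add, ha.1, hb.1, add_zero]
        · rw [hiter, ha.2, hb.2]
      zero_mem' := ⟨smul_zero 2, hiter0 5⟩
      neg_mem' := fun {a} ha => by
        refine ⟨?_, ?_⟩
        · rw [smul_neg, ha.1, neg_zero]
        · rw [hiterneg, ha.2] } with hK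
  have hKH : K ≤ H := fun x hx => hx.2
  have hHfin : Finite H := h5fin
  have hKfin : Finite K := Finite.Set.subset _ (fun x hx => hKH hx)
  have hHcard : Nat.card H = 6 := h5card
  have hKdvd : Nat.card K ∣ 6 := hHcard ▸ AddSubgroup.card_dvd_of_le hKH
  -- Cauchy: H has an element of order 2
  obtain ⟨a, ha⟩ : ∃ x : H, addOrderOf x = 2 := by
    have : Fact (Nat.Prime 2) := ⟨Nat.prime_two⟩
    exact exists_prime_addOrderOf_dvd_card' 2 (by rw [hHcard]; norm_num)
  have ha2 : 2 • (a : G) = 0 := by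
    have := addOrderOf_nsmul_eq_zero a
    rw [ha] at this
    exact_mod_cast congrArg (Subtype.val) this
  have haH : (⇑T)^[5] (a : G) = (a : G) := a.2
  have hane : (a : G) ≠ 0 := by
    intro h0
    have : (a : H) = 0 := Subtype.ext h0
    rw [this, addOrderOf_zero] at ha
    norm_num at ha
  -- T a also lies in K
  have haK : (a : G) ∈ K := ⟨ha2, haH⟩
  have hTaK : T (a : G) ∈ K := by
    refine ⟨?_, ?_⟩
    · rw [← map_nsmul, ha2, map_zero]
    · have : (⇑T)^[5] (T (a : G)) = T ((⇑T)^[5] (a : G)) := by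
        rw [← Function.iterate_succ_apply (⇑T) 5, Function.iterate_succ_apply']
      rw [this, haH]
  -- 3 does not divide card K
  have h3 : ¬ 3 ∣ Nat.card K := by
    intro h3d
    have : Fact (Nat.Prime 3) := ⟨Nat.prime_three⟩
    obtain ⟨x, hx⟩ : ∃ x : K, addOrderOf x = 3 := exists_prime_addOrderOf_dvd_card' 3 h3d
    have h2x : 2 • x = 0 := by
      have := x.2.1
      exact Subtype.ext (by exact_mod_cast this)
    have := addOrderOf_dvd_of_nsmul_eq_zero h2x
    rw [hx] at this
    omega
  -- hence card K ≤ 2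
  have hKcard : Nat.card K ≤ 2 := by
    have hub : Nat.card K ≤ 6 := Nat.le_of_dvd (by norm_num) hKdvd
    interval_cases h : Nat.card K <;> omega
  -- T a ≠ 0
  have hTane : T (a : G) ≠ 0 := fun h0 => hane (by
    have := congrArg T.symm h0
    rwa [T.symm_apply_apply, map_zero] at this)
  -- pigeonhole: T a = a
  have hTa : T (a : G) = (a : G) := by
    by_contra hne
    have hsub : ({0, (a : G), T (a : G)} : Set G) ⊆ (K : Set G) := by
      rintro x (rfl | rfl | rfl)
      · exact K.zero_mem
      · exact haK
      · exact hTaK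
    have hfin : (K : Set G).Finite := hKfin
    have h3le : 3 ≤ (K : Set G).ncard := by
      have h3card : ({0, (a : G), T (a : G)} : Set G).ncard = 3 := by
        rw [Set.ncard_insert_of_notMem (by simp [Ne.symm hane, Ne.symm hTane]),
          Set.ncard_pair (fun hh => hne hh.symm)]
      rw [← h3card]
      exact Set.ncard_le_ncard hsub hfin
    have hle2 : ((K : Set G)).ncard ≤ 2 :=
      le_trans (le_of_eq (Nat.card_coe_set_eq _).symm) hKcard
    omega
  -- so a is a fixed point of T, contradicting card Fix(T) = 1
  have hmem : (a : G) ∈ {g : G | (⇑T)^[1] g = g} := by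
    simp only [Set.mem_setOf_eq, Function.iterate_one]; exact hTa
  have h0mem : (0 : G) ∈ {g : G | (⇑T)^[1] g = g} := by
    simp only [Set.mem_setOf_eq, Function.iterate_one, map_zero]
  rw [Nat.card_eq_one_iff_exists] at h1card
  obtain ⟨⟨x, hx⟩, hx1⟩ := h1card
  have e1 := hx1 ⟨_, hmem⟩
  have e2 := hx1 ⟨_, h0mem⟩
  exact hane ((congrArg Subtype.val e1).trans (congrArg Subtype.val e2).symm)
end

section
/- Let S be a set of rational primes and let a, b be coprime integers with b ≠ 0, |a| ≠ |b|, such that every prime factor of a·b lies in S. If for every n ≥ 1 the largest positive divisor of |a^n − b^n| coprime to every prime in S equals 2^n − 1, then S = {2} and a/b ∈ {2, 1/2}. -/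
/-- Let `S` be a set of rational primes and let `a, b` be coprime integers
with `b ≠ 0`, `|a| ≠ |b|`, such that every prime factor of `a·b` lies in `S`. If for every
`n ≥ 1` the largest positive divisor of `|aⁿ − bⁿ|` coprime to every prime in `S` equals
`2ⁿ − 1`, then `S = {2}` and `a/b ∈ {2, 1/2}`. -/
theorem stmt_13 (S : Set ℕ) (hSprime : ∀ p ∈ S, p.Prime) (a b : ℤ)
    (hab : IsCoprime a b) (hb : b ≠ 0) (hne : a.natAbs ≠ b.natAbs)
    (hS : ∀ p : ℕ, p.Prime → (p : ℤ) ∣ a * b → p ∈ S)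
    (hF : ∀ n : ℕ, 1 ≤ n →
      IsGreatest {d : ℕ | 0 < d ∧ (d : ℤ) ∣ a ^ n - b ^ n ∧ ∀ p ∈ S, ¬ p ∣ d} (2 ^ n - 1)) :
    S = {2} ∧ ((a : ℚ) / b = 2 ∨ (a : ℚ) / b = 1 / 2) := by
  -- Step 1: 2 ∈ S
  have h2S : (2 : ℕ) ∈ S := by
    by_contra h2
    have hab2 : ¬ (2:ℤ) ∣ a * b := fun h => h2 (hS 2 Nat.prime_two h)
    have ha2 : ¬ (2:ℤ) ∣ a := fun h => hab2 (h.mul_right b)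
    have hb2 : ¬ (2:ℤ) ∣ b := fun h => hab2 (h.mul_left a)
    have hd : (2:ℤ) ∣ a - b := by
      rcases Int.even_or_odd a with ha | ha
      · exact absurd ha.two_dvd ha2
      rcases Int.even_or_odd b with hbb | hbb
      · exact absurd hbb.two_dvd hb2
      exact (Int.even_sub.mpr (iff_of_false (Int.not_even_iff_odd.mpr ha)
        (Int.not_even_iff_odd.mpr hbb))).two_dvd
    have hmem : (2 : ℕ) ∈ {d : ℕ | 0 < d ∧ (d : ℤ) ∣ a ^ 1 - b ^ 1 ∧ ∀ p ∈ S, ¬ p ∣ d} := by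
      refine ⟨by norm_num, by simpa using hd, fun p hp hpd => ?_⟩
      have hpp := hSprime p hp
      have : p = 2 := (Nat.prime_dvd_prime_iff_eq hpp Nat.prime_two).mp hpd
      exact h2 (this ▸ hp)
    have := (hF 1 le_rfl).2 hmem
    norm_num at this
  -- Step 2: S = {2}
  have hSeq : S = {2} := by
    ext p
    simp only [Set.mem_singleton_iff]
    constructor
    · intro hp
      by_contra hp2
      have hpp := hSprime p hp
      haveI := Fact.mk hpp
      have h2ne : (2 : ZMod p) ≠ 0 := by
        intro h
        have : p ∣ 2 := by
          have := (ZMod.natCast_eq_zero_iff 2 p).mp (by exact_mod_cast h)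
          exact this
        exact hp2 ((Nat.prime_dvd_prime_iff_eq hpp Nat.prime_two).mp this)
      have hpow : (2 : ZMod p) ^ (p - 1) = 1 := ZMod.pow_card_sub_one_eq_one h2ne
      have h1 : (1:ℕ) ≤ 2 ^ (p - 1) := Nat.one_le_two_pow
      have hdvd : p ∣ 2 ^ (p - 1) - 1 := by
        have hz : ((2 ^ (p - 1) - 1 : ℕ) : ZMod p) = 0 := by
          rw [Nat.cast_sub h1]
          push_cast
          rw [hpow]
          ring
        exact (ZMod.natCast_eq_zero_iff _ _).mp hz
      have hn1 : 1 ≤ p - 1 := by have := hpp.two_le; omega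
      exact (hF (p - 1) hn1).1.2.2 p hp hdvd
    · rintro rfl; exact h2S
  refine ⟨hSeq, ?_⟩
  -- helper: an odd integer all of whose prime factors equal 2 is ±1
  have key : ∀ z : ℤ, (∀ p : ℕ, p.Prime → (p:ℤ) ∣ z → p = 2) → ¬ (2:ℤ) ∣ z →
      z = 1 ∨ z = -1 := by
    intro z hz h2
    have h1 : z.natAbs = 1 := by
      by_contra h
      obtain ⟨p, pp, hpd⟩ := Nat.exists_prime_and_dvd h
      have hpz : (p:ℤ) ∣ z := Int.natAbs_dvd_natAbs.mp (by simpa using hpd)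
      have := hz p pp hpz
      subst this
      exact h2 (by exact_mod_cast hpz)
    have := Int.natAbs_eq_iff.mp h1
    simpa using this
  -- prime factors of a and b are 2
  have hfa : ∀ p : ℕ, p.Prime → (p:ℤ) ∣ a → p = 2 := by
    intro p pp hpd
    have := hS p pp (hpd.mul_right b)
    rw [hSeq] at this; simpa using this
  have hfb : ∀ p : ℕ, p.Prime → (p:ℤ) ∣ b → p = 2 := by
    intro p pp hpd
    have := hS p pp (hpd.mul_left a)
    rw [hSeq] at this; simpa using this
  -- prime factors of a - b are 2
  have hfab : ∀ p : ℕ, p.Prime → (p:ℤ) ∣ (a - b) → p = 2 := by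
    intro p pp hpd
    by_contra hp2
    have hmem : p ∈ {d : ℕ | 0 < d ∧ (d : ℤ) ∣ a ^ 1 - b ^ 1 ∧ ∀ q ∈ S, ¬ q ∣ d} := by
      refine ⟨pp.pos, by simpa using hpd, fun q hq hqd => ?_⟩
      rw [hSeq] at hq
      simp only [Set.mem_singleton_iff] at hq
      subst hq
      exact hp2 ((Nat.prime_dvd_prime_iff_eq Nat.prime_two pp).mp hqd).symm
    have := (hF 1 le_rfl).2 hmem
    norm_num at this
    exact absurd this (by have := pp.two_le; omega)
  have ha0 : a ≠ 0 := by
    intro h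
    have h3 : (3:ℕ) ∈ S := hS 3 (by norm_num) (by rw [h]; simp)
    rw [hSeq] at h3
    simp at h3
  -- not both even
  have hnboth : ¬ ((2:ℤ) ∣ a ∧ (2:ℤ) ∣ b) := by
    rintro ⟨h1, h2⟩
    have := Int.isUnit_iff.mp (hab.isUnit_of_dvd' h1 h2)
    omega
  by_cases h2a : (2:ℤ) ∣ a
  · -- a even, b odd
    have h2b : ¬ (2:ℤ) ∣ b := fun h => hnboth ⟨h2a, h⟩
    have hbval := key b hfb h2b
    have h2ab : ¬ (2:ℤ) ∣ (a - b) := by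
      intro h
      exact h2b (by have : b = a - (a - b) := by ring
                    rw [this]; exact dvd_sub h2a h)
    have habval := key (a - b) hfab h2ab
    refine Or.inl ?_
    have : a = 2 ∧ b = 1 ∨ a = -2 ∧ b = -1 := by omega
    rcases this with ⟨rfl, rfl⟩ | ⟨rfl, rfl⟩ <;> norm_num
  · -- a odd
    have haval := key a hfa h2a
    by_cases h2b : (2:ℤ) ∣ b
    · have h2ab : ¬ (2:ℤ) ∣ (a - b) := by
        intro h
        exact h2a (by have : a = (a - b) + b := by ring
                      rw [this]; exact dvd_add h h2b)
      have habval := key (a - b) hfab h2ab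
      refine Or.inr ?_
      have : a = 1 ∧ b = 2 ∨ a = -1 ∧ b = -2 := by omega
      rcases this with ⟨rfl, rfl⟩ | ⟨rfl, rfl⟩ <;> norm_num
    · -- both odd : both ±1, contradiction with hne
      have hbval := key b hfb h2b
      exfalso
      rcases haval with rfl | rfl <;> rcases hbval with rfl | rfl <;> simp at hne
end

section
/- There exists an uncountable family of additive subgroups H of ℚ, pairwise non-isomorphic as abstract abelian groups, such that each H contains ℤ, each H is invariant under multiplication by 2 and by 1/2 (so x ↦ 2x is a group automorphism of H), and for every n ≥ 1 the quotient group H/(2^n − 1)H is finite of cardinality 2^n − 1. -/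
/-!
For a set `S` of primes let `H_S ≤ ℚ` be the group of fractions whose denominator divides
`2 ^ j * p₁ ⋯ pᵣ` with distinct `pᵢ ∈ S`. An isomorphism `f : H_S ≃+ H_T` sends `1/p` to `f 1 / p`;
for an odd `p ∈ S \ T` not dividing the numerator of `f 1` this forces `1/p ∈ H_T`, which is false,
so `S \ T` is finite. Sets of primes with pairwise infinite differences, indexed by `Set ℕ`,
therefore give uncountably many isomorphism types. For odd `m`, with `d` the product of the primes
of `S` dividing `m`, `k ↦ k/d` induces `ℤ/m ≃ H_S/mH_S`, because every element of `H_S` is `a/(bd)`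
with `b` prime to `m`.
-/

open Finset

def dyadicDenom (j : ℕ) (s : Finset ℕ) : ℕ := 2 ^ j * ∏ p ∈ s, p

lemma dyadicDenom_dvd_dyadicDenom {j j' : ℕ} {s s' : Finset ℕ} (hj : j ≤ j') (hs : s ⊆ s') :
    dyadicDenom j s ∣ dyadicDenom j' s' :=
  mul_dvd_mul (pow_dvd_pow 2 hj) (prod_dvd_prod_of_subset s s' _ hs)

lemma exists_natCast_mul_eq_intCast_of_dvd {N M : ℕ} {x : ℚ} (hNM : N ∣ M)
    (hx : ∃ c : ℤ, (N : ℚ) * x = c) : ∃ c : ℤ, (M : ℚ) * x = c := by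
  obtain ⟨k, rfl⟩ := hNM
  obtain ⟨c, hc⟩ := hx
  exact ⟨k * c, by push_cast; rw [← hc]; ring⟩

def dyadicSubgroup (S : Set ℕ) : AddSubgroup ℚ where
  carrier := {x | ∃ j s, ↑s ⊆ S ∧ ∃ c : ℤ, (dyadicDenom j s : ℚ) * x = c}
  zero_mem' := ⟨0, ∅, by simp, 0, by simp⟩
  add_mem' := by
    classical
    rintro x y ⟨j, s, hs, hx⟩ ⟨j', s', hs', hy⟩
    obtain ⟨c, hc⟩ := exists_natCast_mul_eq_intCast_of_dvd
      (dyadicDenom_dvd_dyadicDenom (le_max_left j j') subset_union_left) hx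
    obtain ⟨c', hc'⟩ := exists_natCast_mul_eq_intCast_of_dvd
      (dyadicDenom_dvd_dyadicDenom (le_max_right j j') subset_union_right) hy
    exact ⟨max j j', s ∪ s', by simp [hs, hs'], c + c', by push_cast; rw [mul_add, hc, hc']⟩
  neg_mem' := by
    rintro x ⟨j, s, hs, c, hc⟩
    exact ⟨j, s, hs, -c, by push_cast; rw [mul_neg, hc]⟩

lemma AddSubgroup.inv_natCast_mem_of_intCast_div_mem {H : AddSubgroup ℚ} (h1 : (1 : ℚ) ∈ H)
    {p : ℕ} (hp : p.Prime) {a : ℤ} (hpa : ¬ (p : ℤ) ∣ a) (ha : (a : ℚ) / p ∈ H) :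
    (p : ℚ)⁻¹ ∈ H := by
  obtain ⟨u, v, huv⟩ := (Prime.coprime_iff_not_dvd (Nat.prime_iff_prime_int.1 hp)).2 hpa
  have hp0 : (p : ℚ) ≠ 0 := by exact_mod_cast hp.ne_zero
  have h : (p : ℚ)⁻¹ = u • (1 : ℚ) + v • ((a : ℚ) / p) := by
    have huv' : (u : ℚ) * p + v * a = 1 := by exact_mod_cast huv
    rw [zsmul_eq_mul, zsmul_eq_mul]
    field_simp
    linear_combination -huv'
  rw [h]
  exact add_mem (zsmul_mem h1 u) (zsmul_mem ha v)

lemma finite_and_natCard_eq_of_surjective_of_ker_eq {Q : Type*} [AddGroup Q] {m : ℕ} [NeZero m]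
    (ψ : ℤ →+ Q) (hψ : Function.Surjective ψ) (hker : ψ.ker = AddSubgroup.zmultiples (m : ℤ)) :
    Finite Q ∧ Nat.card Q = m := by
  let e : Q ≃+ ZMod m := (QuotientAddGroup.quotientKerEquivOfSurjective ψ hψ).symm.trans
    ((QuotientAddGroup.quotientAddEquivOfEq hker).trans (Int.quotientZMultiplesNatEquivZMod m))
  exact ⟨Finite.of_equiv _ e.symm.toEquiv, (Nat.card_congr e.toEquiv).trans (Nat.card_zmod m)⟩

open Classical in
noncomputable def primeFactorsIn (S : Set ℕ) (m : ℕ) : Finset ℕ := {p ∈ m.primeFactors | p ∈ S}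

noncomputable def radicalIn (S : Set ℕ) (m : ℕ) : ℕ := ∏ p ∈ primeFactorsIn S m, p

lemma radicalIn_ne_zero (S : Set ℕ) (m : ℕ) : radicalIn S m ≠ 0 := by
  classical
  exact prod_ne_zero_iff.2 fun p hp => (Nat.prime_of_mem_primeFactors (mem_filter.1 hp).1).ne_zero

namespace dyadicSubgroup

variable {S T : Set ℕ}

lemma intCast_div_mem {s : Finset ℕ} (hs : ↑s ⊆ S) (j : ℕ) (c : ℤ) :
    (c : ℚ) / dyadicDenom j s ∈ dyadicSubgroup S := by
  refine ⟨j, s, hs, ?_⟩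
  by_cases hN : (dyadicDenom j s : ℚ) = 0
  · exact ⟨0, by simp [hN]⟩
  · exact ⟨c, mul_div_cancel₀ _ hN⟩

lemma intCast_mem (c : ℤ) : (c : ℚ) ∈ dyadicSubgroup S := by
  simpa [dyadicDenom] using intCast_div_mem (S := S) (s := ∅) (by simp) 0 c

lemma one_mem : (1 : ℚ) ∈ dyadicSubgroup S := by
  exact_mod_cast intCast_mem (S := S) 1

lemma inv_natCast_mem {p : ℕ} (hp : p ∈ S) : (p : ℚ)⁻¹ ∈ dyadicSubgroup S := by
  simpa [dyadicDenom] using intCast_div_mem (S := S) (j := 0) (s := {p}) (by simpa using hp) 1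

lemma two_mul_mem {x : ℚ} (hx : x ∈ dyadicSubgroup S) : 2 * x ∈ dyadicSubgroup S := by
  obtain ⟨j, s, hs, c, hc⟩ := hx
  exact ⟨j, s, hs, 2 * c, by push_cast; rw [← hc]; ring⟩

lemma div_two_mem {x : ℚ} (hx : x ∈ dyadicSubgroup S) : x / 2 ∈ dyadicSubgroup S := by
  obtain ⟨j, s, hs, c, hc⟩ := hx
  exact ⟨j + 1, s, hs, c, by simp only [← hc, dyadicDenom]; push_cast; ring⟩

lemma inv_natCast_notMem (hS : ∀ p ∈ S, p.Prime) {p : ℕ} (hp : p.Prime) (hp2 : p ≠ 2)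
    (hpS : p ∉ S) : (p : ℚ)⁻¹ ∉ dyadicSubgroup S := by
  rintro ⟨j, s, hs, c, hc⟩
  have hdvd : p ∣ dyadicDenom j s := by
    have hp0 : (p : ℚ) ≠ 0 := by exact_mod_cast hp.ne_zero
    have h : (dyadicDenom j s : ℚ) = p * c := by rw [← hc]; field_simp
    exact Int.natCast_dvd_natCast.1 ⟨c, by exact_mod_cast h⟩
  rcases (Nat.Prime.dvd_mul hp).1 hdvd with h2 | hprod
  · exact hp2 ((Nat.prime_dvd_prime_iff_eq hp Nat.prime_two).1 (hp.dvd_of_dvd_pow h2))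
  · obtain ⟨q, hq, hpq⟩ := (Prime.dvd_finsetProd_iff hp.prime _).1 hprod
    rw [(Nat.prime_dvd_prime_iff_eq hp (hS q (hs hq))).1 hpq] at hpS
    exact hpS (hs hq)

lemma diff_finite_of_addEquiv (hS : ∀ p ∈ S, p.Prime) (hT : ∀ p ∈ T, p.Prime)
    (f : dyadicSubgroup S ≃+ dyadicSubgroup T) : (S \ T).Finite := by
  set q : ℚ := (f ⟨1, one_mem⟩ : ℚ)
  have hq : q.num ≠ 0 := by
    rw [Rat.num_ne_zero]
    intro h
    have := f.injective ((Subtype.ext h : f ⟨1, one_mem⟩ = 0).trans (map_zero f).symm)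
    simp at this
  refine ((Set.finite_Iic q.num.natAbs).insert 2).subset ?_
  rintro p ⟨hpS, hpT⟩
  by_contra hlarge
  simp only [Set.mem_insert_iff, Set.mem_Iic, not_or, not_le] at hlarge
  have hp := hS p hpS
  have hpq : (p : ℚ) * f ⟨(p : ℚ)⁻¹, inv_natCast_mem hpS⟩ = q := by
    have h : (p : ℤ) • (⟨(p : ℚ)⁻¹, inv_natCast_mem hpS⟩ : dyadicSubgroup S) = ⟨1, one_mem⟩ :=
      Subtype.ext (by simp [hp.ne_zero])
    have := congrArg (fun z => (f z : ℚ)) h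
    simp only [map_zsmul, AddSubgroup.coe_zsmul, zsmul_eq_mul, Int.cast_natCast] at this
    exact this
  have hnum : (q.num : ℚ) / p ∈ dyadicSubgroup T := by
    have h : (q.num : ℚ) / p = (q.den : ℤ) • (f ⟨(p : ℚ)⁻¹, inv_natCast_mem hpS⟩ : ℚ) := by
      have hp0 : (p : ℚ) ≠ 0 := by exact_mod_cast hp.ne_zero
      rw [zsmul_eq_mul, ← Rat.mul_den_eq_num, ← hpq]
      field_simp
      push_cast
      ring
    rw [h]
    exact zsmul_mem (SetLike.coe_mem _) _
  have hpnum : ¬ (p : ℤ) ∣ q.num := fun hdvd =>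
    (Nat.le_of_dvd (Int.natAbs_pos.2 hq) (Int.natCast_dvd.1 hdvd)).not_gt hlarge.2
  exact inv_natCast_notMem hT hp hlarge.1 hpT
    (AddSubgroup.inv_natCast_mem_of_intCast_div_mem one_mem hp hpnum hnum)

lemma exists_coprime_denom (hS : ∀ p ∈ S, p.Prime) {m : ℕ} (hm : Odd m) {x : ℚ}
    (hx : x ∈ dyadicSubgroup S) :
    ∃ b : ℕ, b ≠ 0 ∧ b.Coprime m ∧
      (∀ c : ℤ, (c : ℚ) / (b * radicalIn S m : ℕ) ∈ dyadicSubgroup S) ∧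
      ∃ a : ℤ, ((b * radicalIn S m : ℕ) : ℚ) * x = a := by
  classical
  obtain ⟨j, s, hs, hx⟩ := hx
  have hP : ↑(primeFactorsIn S m) ⊆ S := fun p hp => (mem_filter.1 hp).2
  have hsP : ↑(s ∪ primeFactorsIn S m) ⊆ S := by simp [hs, hP]
  have hbd : 2 ^ j * (∏ p ∈ (s ∪ primeFactorsIn S m) \ primeFactorsIn S m, p) *
      radicalIn S m = dyadicDenom j (s ∪ primeFactorsIn S m) := by
    rw [dyadicDenom, radicalIn, mul_assoc, prod_sdiff subset_union_right]
  refine ⟨2 ^ j * ∏ p ∈ (s ∪ primeFactorsIn S m) \ primeFactorsIn S m, p, ?_, ?_, ?_, ?_⟩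
  · exact mul_ne_zero (pow_ne_zero j two_ne_zero)
      (prod_ne_zero_iff.2 fun p hp => (hS p (hsP (mem_sdiff.1 hp).1)).ne_zero)
  · refine Nat.Coprime.mul_left (Nat.Coprime.pow_left j (Nat.coprime_two_left.2 hm))
      (Nat.Coprime.prod_left fun p hp => ?_)
    obtain ⟨hpsP, hpP⟩ := mem_sdiff.1 hp
    have hpS : p ∈ S := hsP hpsP
    refine (hS p hpS).coprime_iff_not_dvd.2 fun hpm => hpP ?_
    exact mem_filter.2 ⟨Nat.mem_primeFactors.2 ⟨hS p hpS, hpm, hm.pos.ne'⟩, hpS⟩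
  · intro c
    rw [hbd]
    exact intCast_div_mem hsP j c
  · rw [hbd]
    exact exists_natCast_mul_eq_intCast_of_dvd
      (dyadicDenom_dvd_dyadicDenom le_rfl subset_union_left) hx

lemma dvd_of_intCast_div_radicalIn_eq (hS : ∀ p ∈ S, p.Prime) {m : ℕ} (hm : Odd m) {k : ℤ}
    {h : ℚ} (hh : h ∈ dyadicSubgroup S) (hk : (k : ℚ) / radicalIn S m = m * h) :
    (m : ℤ) ∣ k := by
  obtain ⟨b, -, hb, -, a, ha⟩ := exists_coprime_denom hS hm hh
  have hd : (radicalIn S m : ℚ) ≠ 0 := by exact_mod_cast radicalIn_ne_zero S m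
  have hbk : (b : ℚ) * k = m * a := by
    rw [(div_eq_iff hd).1 hk, ← ha]
    push_cast
    ring
  refine (Nat.isCoprime_iff_coprime.2 hb.symm).dvd_of_dvd_mul_left ⟨a, ?_⟩
  exact_mod_cast hbk

lemma exists_sub_intCast_div_radicalIn_eq (hS : ∀ p ∈ S, p.Prime) {m : ℕ} (hm : Odd m) {x : ℚ}
    (hx : x ∈ dyadicSubgroup S) :
    ∃ k : ℤ, ∃ h ∈ dyadicSubgroup S, x - k / radicalIn S m = m * h := by
  obtain ⟨b, hb0, hb, hdiv, a, ha⟩ := exists_coprime_denom hS hm hx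
  obtain ⟨u, v, huv⟩ := Nat.isCoprime_iff_coprime.2 hb
  have hd : (radicalIn S m : ℚ) ≠ 0 := by exact_mod_cast radicalIn_ne_zero S m
  refine ⟨a * u, _, hdiv (a * v), ?_⟩
  have huv' : (u : ℚ) * b + v * m = 1 := by exact_mod_cast huv
  have hx' : x = a / (b * radicalIn S m) := by
    rw [← ha]; push_cast; field_simp
  rw [hx']
  push_cast
  field_simp
  linear_combination -(a : ℚ) * huv'

lemma inv_radicalIn_mem (S : Set ℕ) (m : ℕ) : (radicalIn S m : ℚ)⁻¹ ∈ dyadicSubgroup S := by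
  classical
  have hP : ↑(primeFactorsIn S m) ⊆ S := fun p hp => (mem_filter.1 hp).2
  simpa [dyadicDenom, radicalIn] using intCast_div_mem hP 0 1

lemma finite_and_natCard_quotient_zsmul (hS : ∀ p ∈ S, p.Prime) {m : ℕ} (hm : Odd m) :
    Finite (dyadicSubgroup S ⧸ AddSubgroup.map
        (zsmulAddGroupHom (m : ℤ) : dyadicSubgroup S →+ dyadicSubgroup S) ⊤) ∧
      Nat.card (dyadicSubgroup S ⧸ AddSubgroup.map
        (zsmulAddGroupHom (m : ℤ) : dyadicSubgroup S →+ dyadicSubgroup S) ⊤) = m := by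
  have : NeZero m := ⟨hm.pos.ne'⟩
  set mH := AddSubgroup.map (zsmulAddGroupHom (m : ℤ) : dyadicSubgroup S →+ dyadicSubgroup S) ⊤
  have hmem : ∀ y : dyadicSubgroup S, y ∈ mH ↔ ∃ h ∈ dyadicSubgroup S, (y : ℚ) = m * h := by
    intro y
    simp [mH, AddSubgroup.mem_map, Subtype.ext_iff, eq_comm]
  let g : dyadicSubgroup S := ⟨(radicalIn S m : ℚ)⁻¹, inv_radicalIn_mem S m⟩
  let ψ : ℤ →+ dyadicSubgroup S ⧸ mH := (QuotientAddGroup.mk' mH).comp (zmultiplesHom _ g)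
  refine finite_and_natCard_eq_of_surjective_of_ker_eq ψ ?_ ?_
  · rintro ⟨x⟩
    obtain ⟨k, h, hh, hk⟩ := exists_sub_intCast_div_radicalIn_eq hS hm x.2
    refine ⟨k, (QuotientAddGroup.eq_iff_sub_mem).2 ((hmem _).2 ⟨-h, neg_mem hh, ?_⟩)⟩
    simp only [g, zmultiplesHom_apply, AddSubgroup.coe_sub, AddSubgroup.coe_zsmul, zsmul_eq_mul]
    linear_combination -hk
  · ext k
    simp only [ψ, AddMonoidHom.mem_ker, AddMonoidHom.comp_apply, QuotientAddGroup.mk'_apply,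
      QuotientAddGroup.eq_zero_iff, hmem, Int.mem_zmultiples_iff]
    constructor
    · rintro ⟨h, hh, hk⟩
      refine dvd_of_intCast_div_radicalIn_eq hS hm hh ?_
      simpa [g, div_eq_mul_inv] using hk
    · rintro ⟨t, rfl⟩
      exact ⟨((t • g : dyadicSubgroup S) : ℚ), (t • g).2, by simp [g]; ring⟩

end dyadicSubgroup

def primeBlocks (X : Set ℕ) : Set ℕ := {p | ∃ k ∈ X, ∃ i, Nat.nth Nat.Prime (Nat.pair k i) = p}

lemma prime_of_mem_primeBlocks {X : Set ℕ} {p : ℕ} (hp : p ∈ primeBlocks X) : p.Prime := by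
  obtain ⟨k, -, i, rfl⟩ := hp
  exact Nat.prime_nth_prime _

lemma primeBlocks_diff_infinite {X Y : Set ℕ} {k : ℕ} (hX : k ∈ X) (hY : k ∉ Y) :
    (primeBlocks X \ primeBlocks Y).Infinite := by
  have hinj := Nat.nth_injective Nat.infinite_setOfPred_prime
  refine Set.infinite_of_injective_forall_mem (f := fun i => Nat.nth Nat.Prime (Nat.pair k i))
    (fun i i' h => (Nat.pair_eq_pair.1 (hinj h)).2) fun i => ⟨⟨k, hX, i, rfl⟩, ?_⟩
  rintro ⟨k', hk', i', h⟩
  rw [(Nat.pair_eq_pair.1 (hinj h)).1] at hk'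
  exact hY hk'

lemma isEmpty_addEquiv_of_ne {X Y : Set ℕ} (hXY : X ≠ Y) :
    IsEmpty (dyadicSubgroup (primeBlocks X) ≃+ dyadicSubgroup (primeBlocks Y)) := by
  obtain ⟨k, hk⟩ : ∃ k, ¬ (k ∈ X ↔ k ∈ Y) := not_forall.1 fun h => hXY (Set.ext h)
  rw [not_iff] at hk
  refine ⟨fun f => ?_⟩
  by_cases hX : k ∈ X
  · exact primeBlocks_diff_infinite hX (fun hY => hk.2 hY hX)
      (dyadicSubgroup.diff_finite_of_addEquiv (fun _ => prime_of_mem_primeBlocks)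
        (fun _ => prime_of_mem_primeBlocks) f)
  · exact primeBlocks_diff_infinite (hk.1 hX) hX
      (dyadicSubgroup.diff_finite_of_addEquiv (fun _ => prime_of_mem_primeBlocks)
        (fun _ => prime_of_mem_primeBlocks) f.symm)

lemma not_countable_set_nat : ¬ Countable (Set ℕ) := fun _ =>
  Function.cantor_injective _ (Countable.exists_injective_nat (Set ℕ)).choose_spec

/-- There exists an uncountable family of additive subgroups `H` of `ℚ`,
pairwise non-isomorphic as abstract abelian groups, such that each `H` contains `ℤ`, each
`H` is invariant under multiplication by `2` and by `1/2` (so `x ↦ 2x` is a group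
automorphism of `H`), and for every `n ≥ 1` the quotient group `H/(2ⁿ − 1)H` is finite of
cardinality `2ⁿ − 1`. -/
theorem stmt_14 :
    ∃ 𝒜 : Set (AddSubgroup ℚ),
      ¬ 𝒜.Countable ∧
      (∀ H ∈ 𝒜, ∀ m : ℤ, (m : ℚ) ∈ H) ∧
      (∀ H ∈ 𝒜, ∀ x : ℚ, x ∈ H → 2 * x ∈ H ∧ x / 2 ∈ H) ∧
      (∀ H₁ ∈ 𝒜, ∀ H₂ ∈ 𝒜, H₁ ≠ H₂ → IsEmpty (↥H₁ ≃+ ↥H₂)) ∧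
      (∀ H ∈ 𝒜, ∀ n : ℕ, 1 ≤ n →
        Finite (↥H ⧸ AddSubgroup.map (zsmulAddGroupHom ((2 : ℤ) ^ n - 1) : ↥H →+ ↥H) ⊤) ∧
        Nat.card (↥H ⧸ AddSubgroup.map (zsmulAddGroupHom ((2 : ℤ) ^ n - 1) : ↥H →+ ↥H) ⊤) =
          2 ^ n - 1) := by
  have hinj : Function.Injective fun X => dyadicSubgroup (primeBlocks X) := fun X Y h => by
    by_contra hXY
    exact (isEmpty_addEquiv_of_ne hXY).false (AddEquiv.addSubgroupCongr h)
  refine ⟨Set.range fun X => dyadicSubgroup (primeBlocks X), fun hc => ?_, ?_, ?_, ?_, ?_⟩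
  · rw [← Set.image_univ] at hc
    exact not_countable_set_nat (Set.countable_univ_iff.1
      (Set.countable_of_injective_of_countable_image hinj.injOn hc))
  · rintro _ ⟨X, rfl⟩ c
    exact dyadicSubgroup.intCast_mem c
  · rintro _ ⟨X, rfl⟩ x hx
    exact ⟨dyadicSubgroup.two_mul_mem hx, dyadicSubgroup.div_two_mem hx⟩
  · rintro _ ⟨X, rfl⟩ _ ⟨Y, rfl⟩ hne
    exact isEmpty_addEquiv_of_ne fun h => hne (by rw [h])
  · rintro _ ⟨X, rfl⟩ n hn
    have hodd : Odd (2 ^ n - 1) := Nat.Even.sub_odd Nat.one_le_two_pow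
      ((Nat.even_pow' (by omega)).2 even_two) odd_one
    have hcast : (2 : ℤ) ^ n - 1 = ((2 ^ n - 1 : ℕ) : ℤ) := by
      push_cast [Nat.one_le_two_pow]
      ring
    rw [hcast]
    exact dyadicSubgroup.finite_and_natCard_quotient_zsmul (fun _ => prime_of_mem_primeBlocks) hodd
end
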